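/- Let z_1, …, z_T ∈ ℝ^{d} with ‖z_t‖² ≤ λ, and V_t = λI + Σ_{s<t} z_s z_s^T. Then Σ_{t=1}^T ‖z_t‖_{V_t^{-1}} ≤ sqrt(2 T d log(T+1)), where ‖z‖_A = sqrt(z^T A z). -/

import Mathlib

/-!
Write `q t = z tᵀ (V t)⁻¹ z t`. By the matrix determinant lemma
`det V (t + 1) = det V t * (1 + q t)`, so `∑ log (1 + q t)` telescopes to
`log det V T - d log λ`, which is at most `d log (T + 1)` because every eigenvalue of `V T` is at
most `λ (T + 1)`. As `‖z t‖² ≤ λ ≤ λ_min (V t)` gives `q t ≤ 1`, and `x ≤ 2 log (1 + x)` on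
`[0, 1]`, this yields `∑ q t ≤ 2 d log (T + 1)`; Cauchy–Schwarz then bounds `∑ √(q t)`.
-/

open Matrix Finset

section

variable {n : Type*} [Fintype n]

lemma sq_dotProduct_le (v x : n → ℝ) : (v ⬝ᵥ x) ^ 2 ≤ (v ⬝ᵥ v) * (x ⬝ᵥ x) := by
  simpa only [dotProduct, sq] using sum_mul_sq_le_sq_mul_sq univ v x

lemma dotProduct_self_nonneg (x : n → ℝ) : 0 ≤ x ⬝ᵥ x := by
  simpa using dotProduct_self_star_nonneg x

lemma dotProduct_vecMulVec_self_mulVec (v x : n → ℝ) :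
    x ⬝ᵥ vecMulVec v v *ᵥ x = (v ⬝ᵥ x) ^ 2 := by
  rw [vecMulVec_mulVec, op_smul_eq_smul, dotProduct_smul, smul_eq_mul, dotProduct_comm x, sq]

lemma posSemidef_sum_vecMulVec_self {ι : Type*} (s : Finset ι) (z : ι → n → ℝ) :
    (∑ i ∈ s, vecMulVec (z i) (z i)).PosSemidef :=
  posSemidef_sum _ fun i _ => by simpa using posSemidef_vecMulVec_self_star (z i)

variable [DecidableEq n]

theorem Matrix.det_add_vecMulVec {R : Type*} [CommRing R] {A : Matrix n n R}
    (hA : IsUnit A.det) (u v : n → R) :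
    (A + vecMulVec u v).det = A.det * (1 + v ⬝ᵥ A⁻¹ *ᵥ u) := by
  rw [vecMulVec_eq Unit, det_add_replicateCol_mul_replicateRow hA]
  congr 1
  rw [Matrix.mul_assoc, ← replicateCol_mulVec, det_unique]
  simp [replicateRow_mul_replicateCol_apply]

lemma Matrix.PosSemidef.det_le_pow_card {A : Matrix n n ℝ} (hA : A.PosSemidef) {c : ℝ}
    (h : ∀ x, x ⬝ᵥ A *ᵥ x ≤ c * (x ⬝ᵥ x)) : A.det ≤ c ^ Fintype.card n := by
  have heig : ∀ i, hA.1.eigenvalues i ≤ c := by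
    intro i
    have hunit : (⇑(hA.1.eigenvectorBasis i) : n → ℝ) ⬝ᵥ ⇑(hA.1.eigenvectorBasis i) = 1 := by
      have h := real_inner_self_eq_norm_sq (hA.1.eigenvectorBasis i)
      rw [hA.1.eigenvectorBasis.orthonormal.1 i, one_pow,
        EuclideanSpace.inner_eq_star_dotProduct] at h
      simpa using h
    simpa [hA.1.eigenvalues_eq i, hunit] using h (hA.1.eigenvectorBasis i)
  calc A.det = ∏ i, hA.1.eigenvalues i := by simp [hA.1.det_eq_prod_eigenvalues]
    _ ≤ ∏ _i, c := prod_le_prod (fun i _ => hA.eigenvalues_nonneg i) fun i _ => heig i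
    _ = c ^ Fintype.card n := by simp

lemma mul_dotProduct_smul_one_add_inv_mulVec_le {lam : ℝ} (hlam : 0 < lam)
    {S : Matrix n n ℝ} (hS : S.PosSemidef) (v : n → ℝ) :
    lam * (v ⬝ᵥ (lam • 1 + S)⁻¹ *ᵥ v) ≤ v ⬝ᵥ v := by
  -- with `w = A⁻¹ v`: `λ ‖w‖² ≤ wᵀ A w = vᵀ w` and `(vᵀ w)² ≤ ‖v‖² ‖w‖²`
  set A := lam • (1 : Matrix n n ℝ) + S
  have hA : A.PosDef := (PosDef.one.smul hlam).add_posSemidef hS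
  set w := A⁻¹ *ᵥ v
  have hAw : A *ᵥ w = v := by
    rw [mulVec_mulVec, mul_nonsing_inv _ ((isUnit_iff_isUnit_det A).mp hA.isUnit), one_mulVec]
  have hSw : 0 ≤ w ⬝ᵥ S *ᵥ w := by simpa using hS.dotProduct_mulVec_nonneg w
  have hlower : lam * (w ⬝ᵥ w) ≤ v ⬝ᵥ w := by
    rw [← hAw, add_mulVec, smul_mulVec, one_mulVec, add_dotProduct, smul_dotProduct,
      smul_eq_mul, dotProduct_comm (S *ᵥ w)]
    linarith
  have hq : 0 ≤ v ⬝ᵥ w := (mul_nonneg hlam.le (dotProduct_self_nonneg w)).trans hlower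
  have hsq : lam * (v ⬝ᵥ w) ^ 2 ≤ (v ⬝ᵥ v) * (v ⬝ᵥ w) := by
    nlinarith [sq_dotProduct_le v w, dotProduct_self_nonneg v]
  rcases hq.eq_or_lt with hq0 | hqpos
  · rw [← hq0, mul_zero]
    exact dotProduct_self_nonneg v
  · nlinarith

end

lemma le_two_mul_log_one_add {x : ℝ} (h0 : 0 ≤ x) (h2 : x ≤ 2) : x ≤ 2 * Real.log (1 + x) :=
  calc x ≤ 2 * (2 * x / (x + 2)) := by
        rw [mul_div_assoc', le_div_iff₀ (by linarith)]
        nlinarith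
    _ ≤ 2 * Real.log (1 + x) := by gcongr; exact Real.le_log_one_add_of_nonneg h0

lemma sum_sqrt_le_sqrt_card_mul_sum {ι : Type*} (s : Finset ι) {f : ι → ℝ}
    (hf : ∀ i ∈ s, 0 ≤ f i) : ∑ i ∈ s, √(f i) ≤ √(#s * ∑ i ∈ s, f i) :=
  calc ∑ i ∈ s, √(f i) = ∑ i ∈ s, 1 * √(f i) := by simp only [one_mul]
    _ ≤ √(∑ i ∈ s, 1 ^ 2) * √(∑ i ∈ s, √(f i) ^ 2) := Real.sum_mul_le_sqrt_mul_sqrt s _ _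
    _ = √(#s * ∑ i ∈ s, f i) := by
        rw [Real.sqrt_mul (by positivity), sum_congr rfl fun i hi => Real.sq_sqrt (hf i hi)]
        simp

section

variable {n : Type*} [DecidableEq n]

noncomputable def designMatrix (lam : ℝ) (z : ℕ → n → ℝ) (t : ℕ) : Matrix n n ℝ :=
  lam • 1 + ∑ s ∈ range t, vecMulVec (z s) (z s)

lemma designMatrix_succ (lam : ℝ) (z : ℕ → n → ℝ) (t : ℕ) :
    designMatrix lam z (t + 1) = designMatrix lam z t + vecMulVec (z t) (z t) := by
  rw [designMatrix, designMatrix, sum_range_succ, add_assoc]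

variable [Fintype n]

noncomputable def ellipticalPotential (lam : ℝ) (z : ℕ → n → ℝ) (t : ℕ) : ℝ :=
  z t ⬝ᵥ (designMatrix lam z t)⁻¹ *ᵥ z t

variable {lam : ℝ} {z : ℕ → n → ℝ} {T : ℕ}

lemma designMatrix_posDef (hlam : 0 < lam) (t : ℕ) : (designMatrix lam z t).PosDef :=
  (PosDef.one.smul hlam).add_posSemidef (posSemidef_sum_vecMulVec_self (range t) z)

lemma det_designMatrix_zero : (designMatrix lam z 0).det = lam ^ Fintype.card n := by
  simp [designMatrix]

lemma det_designMatrix_succ (hlam : 0 < lam) (t : ℕ) :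
    (designMatrix lam z (t + 1)).det =
      (designMatrix lam z t).det * (1 + ellipticalPotential lam z t) := by
  rw [designMatrix_succ, det_add_vecMulVec (designMatrix_posDef hlam t).det_pos.ne'.isUnit,
    ellipticalPotential]

lemma dotProduct_designMatrix_mulVec_le (hz : ∀ s < T, z s ⬝ᵥ z s ≤ lam) (x : n → ℝ) :
    x ⬝ᵥ designMatrix lam z T *ᵥ x ≤ lam * (T + 1) * (x ⬝ᵥ x) := by
  have hterm : ∀ s ∈ range T, x ⬝ᵥ vecMulVec (z s) (z s) *ᵥ x ≤ lam * (x ⬝ᵥ x) := by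
    intro s hs
    rw [dotProduct_vecMulVec_self_mulVec]
    exact (sq_dotProduct_le _ _).trans
      (mul_le_mul_of_nonneg_right (hz s (mem_range.mp hs)) (dotProduct_self_nonneg x))
  calc x ⬝ᵥ designMatrix lam z T *ᵥ x
      = lam * (x ⬝ᵥ x) + ∑ s ∈ range T, x ⬝ᵥ vecMulVec (z s) (z s) *ᵥ x := by
        simp only [designMatrix, add_mulVec, smul_mulVec, one_mulVec, sum_mulVec, dotProduct_add,
          dotProduct_smul, dotProduct_sum, smul_eq_mul]
    _ ≤ lam * (x ⬝ᵥ x) + ∑ _s ∈ range T, lam * (x ⬝ᵥ x) := by gcongr with s hs; exact hterm s hs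
    _ = lam * (T + 1) * (x ⬝ᵥ x) := by rw [sum_const, card_range, nsmul_eq_mul]; ring

lemma log_det_designMatrix_le (hlam : 0 < lam) (hz : ∀ s < T, z s ⬝ᵥ z s ≤ lam) :
    Real.log (designMatrix lam z T).det ≤ Fintype.card n * Real.log (lam * (T + 1)) := by
  rw [← Real.log_pow]
  exact Real.log_le_log (designMatrix_posDef hlam T).det_pos
    ((designMatrix_posDef hlam T).posSemidef.det_le_pow_card (dotProduct_designMatrix_mulVec_le hz))

lemma ellipticalPotential_nonneg (hlam : 0 < lam) (t : ℕ) : 0 ≤ ellipticalPotential lam z t := by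
  simpa [ellipticalPotential] using
    (designMatrix_posDef hlam t).inv.posSemidef.dotProduct_mulVec_nonneg (z t)

lemma ellipticalPotential_le_one (hlam : 0 < lam) {t : ℕ} (hz : z t ⬝ᵥ z t ≤ lam) :
    ellipticalPotential lam z t ≤ 1 := by
  have h := mul_dotProduct_smul_one_add_inv_mulVec_le hlam
    (posSemidef_sum_vecMulVec_self (range t) z) (z t)
  exact le_of_mul_le_mul_left (by rw [mul_one]; exact h.trans hz) hlam

lemma sum_log_one_add_ellipticalPotential (hlam : 0 < lam) (T : ℕ) :
    ∑ t ∈ range T, Real.log (1 + ellipticalPotential lam z t) =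
      Real.log (designMatrix lam z T).det - Fintype.card n * Real.log lam := by
  rw [← Real.log_pow, ← det_designMatrix_zero (z := z),
    ← sum_range_sub (fun t => Real.log (designMatrix lam z t).det)]
  refine sum_congr rfl fun t _ => ?_
  rw [det_designMatrix_succ hlam, Real.log_mul (designMatrix_posDef hlam t).det_pos.ne'
    (by linarith [ellipticalPotential_nonneg (z := z) hlam t]), add_sub_cancel_left]

lemma sum_ellipticalPotential_le (hlam : 0 < lam) (hz : ∀ s < T, z s ⬝ᵥ z s ≤ lam) :
    ∑ t ∈ range T, ellipticalPotential lam z t ≤ 2 * Fintype.card n * Real.log (T + 1) :=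
  calc ∑ t ∈ range T, ellipticalPotential lam z t
      ≤ ∑ t ∈ range T, 2 * Real.log (1 + ellipticalPotential lam z t) := by
        refine sum_le_sum fun t ht => le_two_mul_log_one_add (ellipticalPotential_nonneg hlam t) ?_
        exact (ellipticalPotential_le_one hlam (hz t (mem_range.mp ht))).trans one_le_two
    _ = 2 * (Real.log (designMatrix lam z T).det - Fintype.card n * Real.log lam) := by
        rw [← mul_sum, sum_log_one_add_ellipticalPotential hlam]
    _ ≤ 2 * (Fintype.card n * Real.log (lam * (T + 1)) - Fintype.card n * Real.log lam) := by
        gcongr; exact log_det_designMatrix_le hlam hz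
    _ = 2 * Fintype.card n * Real.log (T + 1) := by
        rw [Real.log_mul hlam.ne' (by positivity)]; ring

theorem sum_sqrt_ellipticalPotential_le (hlam : 0 < lam) (hz : ∀ s < T, z s ⬝ᵥ z s ≤ lam) :
    ∑ t ∈ range T, √(ellipticalPotential lam z t) ≤
      √(2 * T * Fintype.card n * Real.log (T + 1)) :=
  calc ∑ t ∈ range T, √(ellipticalPotential lam z t)
      ≤ √(#(range T) * ∑ t ∈ range T, ellipticalPotential lam z t) :=
        sum_sqrt_le_sqrt_card_mul_sum _ fun t _ => ellipticalPotential_nonneg hlam t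
    _ ≤ √(T * (2 * Fintype.card n * Real.log (T + 1))) := by
        rw [card_range]; gcongr; exact sum_ellipticalPotential_le hlam hz
    _ = √(2 * T * Fintype.card n * Real.log (T + 1)) := by ring_nf

end

lemma Fin.sum_filter_lt_eq_sum_range {M : Type*} [AddCommMonoid M] {T : ℕ} (g : ℕ → M)
    (t : Fin T) : ∑ s ∈ univ.filter (fun s => s < t), g s = ∑ s ∈ range t, g s := by
  rw [filter_gt_eq_Iio, ← Nat.Iio_eq_range, ← Fin.map_valEmbedding_Iio, sum_map]
  rfl

theorem elliptical_potential {d T : ℕ} (lam : ℝ) (hlam : 0 < lam)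
    (z : Fin T → Fin d → ℝ) (hz : ∀ t, z t ⬝ᵥ z t ≤ lam)
    (V : Fin T → Matrix (Fin d) (Fin d) ℝ)
    (hV : ∀ t, V t = lam • (1 : Matrix (Fin d) (Fin d) ℝ) +
      ∑ s ∈ Finset.univ.filter (fun s => s < t), vecMulVec (z s) (z s)) :
    ∑ t, Real.sqrt (z t ⬝ᵥ (V t)⁻¹.mulVec (z t)) ≤
      Real.sqrt (2 * T * d * Real.log (T + 1)) := by
  set y : ℕ → Fin d → ℝ := fun s => if h : s < T then z ⟨s, h⟩ else 0
  have hy : ∀ t : Fin T, y t = z t := fun t => dif_pos t.isLt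
  have hyT : ∀ s < T, y s ⬝ᵥ y s ≤ lam := fun s hs => by simpa [y, hs] using hz ⟨s, hs⟩
  have hVy : ∀ t : Fin T, V t = designMatrix lam y t := by
    intro t
    rw [hV, designMatrix, ← Fin.sum_filter_lt_eq_sum_range (fun s => vecMulVec (y s) (y s))]
    simp only [hy]
  have hsum : ∑ t, √(z t ⬝ᵥ (V t)⁻¹ *ᵥ z t) = ∑ t ∈ range T, √(ellipticalPotential lam y t) := by
    rw [← Fin.sum_univ_eq_sum_range]
    simp only [ellipticalPotential, hy, hVy]
  rw [hsum]
  simpa using sum_sqrt_ellipticalPotential_le hlam hyT
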